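/- Strong duality for TV-distance robust expectation: for any probability measure μ⁰ on a state space S, any uncertainty level ρ ≥ 0, and any bounded value function V : S → [0,H], one has inf_{μ ∈ U^ρ(μ⁰)} ∫_S μ(s')V(s') ds' = max_{α ∈ [min_s V(s), max_s V(s)]} { E_{s'∼μ⁰}[ [V]_α(s') ] − ρ(α − min_{s'} [V]_α(s')) }, where U^ρ(μ⁰) = { μ ∈ Δ(S) : (1/2)‖μ − μ⁰‖₁ ≤ ρ } and [V]_α(s) = min(V(s), α). -/

import Mathlib

/-!
For every clipping level `α ≥ m := min V` and every `μ` in the ball, `⟨μ, V⟩ ≥ ⟨μ, [V]_α⟩`, and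
since `[V]_α` takes values in `[m, α]` while `μ - μ⁰` has total mass zero and `ℓ¹`-norm at most
`2ρ`, `⟨μ - μ⁰, [V]_α⟩ ≥ -ρ (α - m)`: this is weak duality. Equality is attained by moving
mass `ρ` (or all the mass above `m`, if that is less) from the top of `V` to a minimiser of `V`,
and choosing `α` as the level at which the moved mass runs out. The pair is a saddle point,
so the infimum and the supremum are both its value.
-/

open Finset

namespace RobustTV

variable {S : Type*} [Fintype S]

def tvBall (μ0 : S → ℝ) (ρ : ℝ) : Set (S → ℝ) :=
  {μ | (∀ s, 0 ≤ μ s) ∧ (∑ s, μ s = 1) ∧ (1 / 2) * ∑ s, |μ s - μ0 s| ≤ ρ}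

theorem abs_sum_sub_mul_le {μ ν f : S → ℝ} {a b : ℝ} (hsum : ∑ s, μ s = ∑ s, ν s)
    (hf : ∀ s, f s ∈ Set.Icc a b) :
    |∑ s, (μ s - ν s) * f s| ≤ (b - a) / 2 * ∑ s, |μ s - ν s| := by
  have hcentre : ∑ s, (μ s - ν s) * f s = ∑ s, (μ s - ν s) * (f s - (a + b) / 2) := by
    simp only [mul_sub, sum_sub_distrib (f := fun s => (μ s - ν s) * f s), ← sum_mul,
      sum_sub_distrib, hsum, sub_self, zero_mul, sub_zero]
  rw [hcentre, mul_sum]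
  refine (abs_sum_le_sum_abs _ _).trans (sum_le_sum fun s _ => ?_)
  rw [abs_mul, mul_comm]
  gcongr
  rw [abs_le]
  constructor <;> linarith [(hf s).1, (hf s).2]

theorem sum_mul_min_sub_le_of_mem_tvBall {μ0 μ V : S → ℝ} {ρ m α : ℝ} (hμ0 : ∑ s, μ0 s = 1)
    (hμ : μ ∈ tvBall μ0 ρ) (hm : ∀ s, m ≤ V s) (hα : m ≤ α) :
    ∑ s, μ0 s * min (V s) α - ρ * (α - m) ≤ ∑ s, μ s * V s := by
  obtain ⟨hμ_nonneg, hμ_sum, hμ_tv⟩ := hμ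
  have hdev := neg_le_of_abs_le <|
    abs_sum_sub_mul_le (hμ_sum.trans hμ0.symm) fun s => ⟨le_min (hm s) hα, min_le_right (V s) α⟩
  have hbudget := mul_le_mul_of_nonneg_left hμ_tv (sub_nonneg.2 hα)
  calc ∑ s, μ0 s * min (V s) α - ρ * (α - m)
      ≤ ∑ s, μ0 s * min (V s) α + ∑ s, (μ s - μ0 s) * min (V s) α := by linarith
    _ = ∑ s, μ s * min (V s) α := by rw [← sum_add_distrib]; simp only [sub_mul, add_sub_cancel]
    _ ≤ ∑ s, μ s * V s :=
      sum_le_sum fun s _ => mul_le_mul_of_nonneg_left (min_le_left _ _) (hμ_nonneg s)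

section shiftMass

variable [DecidableEq S]

def shiftMass (μ0 q : S → ℝ) (s0 : S) : S → ℝ :=
  fun s => μ0 s - q s + if s = s0 then ∑ s', q s' else 0

variable {μ0 q : S → ℝ} {s0 : S}

theorem sum_shiftMass : ∑ s, shiftMass μ0 q s0 s = ∑ s, μ0 s := by
  simp [shiftMass, sum_add_distrib, sum_sub_distrib]

theorem sum_shiftMass_mul (V : S → ℝ) :
    ∑ s, shiftMass μ0 q s0 s * V s = ∑ s, μ0 s * V s - ∑ s, q s * (V s - V s0) := by
  simp only [shiftMass, add_mul, sub_mul, ite_mul, sum_mul, zero_mul, sum_add_distrib,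
    sum_sub_distrib, sum_ite_eq', mem_univ, ↓reduceIte, mul_sub]
  ring

theorem sum_abs_shiftMass_sub (hq : ∀ s, 0 ≤ q s) (hq0 : q s0 = 0) :
    ∑ s, |shiftMass μ0 q s0 s - μ0 s| = 2 * ∑ s, q s := by
  have hterm : ∀ s, |shiftMass μ0 q s0 s - μ0 s| = q s + if s = s0 then ∑ s', q s' else 0 := by
    intro s
    by_cases hs : s = s0
    · subst hs
      simp [shiftMass, hq0, abs_of_nonneg (sum_nonneg fun s _ => hq s)]
    · simp [shiftMass, hs, abs_of_nonneg (hq s)]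
  simp [hterm, sum_add_distrib, two_mul]

theorem shiftMass_mem_tvBall {ρ : ℝ} (hsum : ∑ s, μ0 s = 1) (hq : ∀ s, q s ∈ Set.Icc 0 (μ0 s))
    (hq0 : q s0 = 0) (hmass : ∑ s, q s ≤ ρ) : shiftMass μ0 q s0 ∈ tvBall μ0 ρ := by
  refine ⟨fun s => ?_, sum_shiftMass.trans hsum, ?_⟩
  · have : 0 ≤ if s = s0 then ∑ s', q s' else 0 := by
      split_ifs
      exacts [sum_nonneg fun s _ => (hq s).1, le_rfl]
    simp only [shiftMass]
    linarith [(hq s).2]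
  · rw [sum_abs_shiftMass_sub (fun s => (hq s).1) hq0]
    linarith

end shiftMass

noncomputable def upperMass (μ0 V : S → ℝ) (β : ℝ) : ℝ := ∑ s, if β < V s then μ0 s else 0

noncomputable def levelMass (μ0 V : S → ℝ) (β : ℝ) : ℝ := ∑ s, if V s = β then μ0 s else 0

theorem exists_upperMass_le_le_add_levelMass {μ0 V : S → ℝ} {ρ : ℝ} {s0 : S} (hρ : 0 ≤ ρ)
    (hs0 : ∀ s, V s0 ≤ V s) (hρ_lt : ρ < upperMass μ0 V (V s0)) :
    ∃ s, V s0 < V s ∧ upperMass μ0 V (V s) ≤ ρ ∧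
      ρ ≤ upperMass μ0 V (V s) + levelMass μ0 V (V s) := by
  classical
  have : Nonempty S := ⟨s0⟩
  obtain ⟨sM, hsM⟩ := Finite.exists_max V
  set C := univ.filter fun s => upperMass μ0 V (V s) ≤ ρ
  have hsM_mem : sM ∈ C := by
    have hzero : upperMass μ0 V (V sM) = 0 :=
      sum_eq_zero fun s _ => if_neg (hsM s).not_gt
    simp [C, hzero, hρ]
  -- `s1` is the lowest level whose strict upper tail fits in the budget; the next lower level
  -- `s2` does not fit, and its strict upper tail is the weak upper tail of `s1`.
  obtain ⟨s1, hs1C, hs1min⟩ := C.exists_min_image V ⟨sM, hsM_mem⟩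
  have hs1 : upperMass μ0 V (V s1) ≤ ρ := (mem_filter.1 hs1C).2
  have hlt : V s0 < V s1 := by
    refine (hs0 s1).lt_of_ne fun h => ?_
    rw [← h] at hs1
    linarith
  obtain ⟨s2, hs2, hs2max⟩ :=
    (univ.filter fun s => V s < V s1).exists_max_image V ⟨s0, by simpa using hlt⟩
  have hs2lt : V s2 < V s1 := (mem_filter.1 hs2).2
  have hs2C : s2 ∉ C := fun h => (hs1min s2 h).not_gt hs2lt
  have hsplit : upperMass μ0 V (V s2) = upperMass μ0 V (V s1) + levelMass μ0 V (V s1) := by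
    rw [upperMass, upperMass, levelMass, ← sum_add_distrib]
    refine sum_congr rfl fun s _ => ?_
    rcases lt_trichotomy (V s) (V s1) with h | h | h
    · have : ¬ V s2 < V s := (hs2max s (by simpa using h)).not_gt
      simp [this, h.not_gt, h.ne]
    · simp [h, hs2lt]
    · simp [h, hs2lt.trans h, h.ne']
  refine ⟨s1, hlt, hs1, ?_⟩
  rw [← hsplit]
  simp only [C, mem_filter, mem_univ, true_and, not_le] at hs2C
  exact hs2C.le

/-- `w s` is the fraction of `μ0 s` to be moved to `s0`, with threshold level `V s1`. -/
theorem exists_threshold_weight {μ0 V : S → ℝ} {ρ : ℝ} {s0 : S} (hμ0 : ∀ s, 0 ≤ μ0 s)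
    (hρ : 0 ≤ ρ) (hs0 : ∀ s, V s0 ≤ V s) :
    ∃ s1 : S, ∃ w : S → ℝ, (∀ s, w s ∈ Set.Icc 0 1) ∧ w s0 = 0 ∧
      (∀ s, w s * (V s - V s1) = max (V s - V s1) 0) ∧ ∑ s, μ0 s * w s ≤ ρ ∧
      (ρ - ∑ s, μ0 s * w s) * (V s1 - V s0) = 0 := by
  by_cases hsmall : upperMass μ0 V (V s0) ≤ ρ
  · refine ⟨s0, fun s => if V s0 < V s then 1 else 0, fun s => ?_, by simp, fun s => ?_, ?_,
      by simp⟩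
    · dsimp only
      split_ifs <;> norm_num
    · dsimp only
      split_ifs with h
      · rw [one_mul, max_eq_left (sub_nonneg.2 h.le)]
      · rw [le_antisymm (not_lt.1 h) (hs0 s)]
        simp
    · simpa [upperMass, mul_ite] using hsmall
  rw [not_le] at hsmall
  obtain ⟨s1, hlt, hupper, hlevel⟩ := exists_upperMass_le_le_add_levelMass hρ hs0 hsmall
  set t := upperMass μ0 V (V s1)
  set b := levelMass μ0 V (V s1)
  have hb : 0 ≤ b := sum_nonneg fun s _ => by split_ifs <;> simp [hμ0 s]
  -- When `b = 0` the budget is `ρ = t` and the junk value `c = 0` is the right one.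
  set c := (ρ - t) / b
  have hcb : c * b = ρ - t := by
    rcases hb.eq_or_lt with h | h
    · simp only [c, ← h, mul_zero]
      linarith
    · exact div_mul_cancel₀ _ h.ne'
  have hmass : ∑ s, μ0 s * (if V s1 < V s then 1 else if V s = V s1 then c else 0) = ρ := by
    have hterm : ∀ s, μ0 s * (if V s1 < V s then 1 else if V s = V s1 then c else 0)
        = (if V s1 < V s then μ0 s else 0) + c * (if V s = V s1 then μ0 s else 0) := by
      intro s
      rcases lt_trichotomy (V s1) (V s) with h | h | h
      · simp [h, h.ne']
      · simp [h]
        ring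
      · simp [h.not_gt, h.ne]
    rw [sum_congr rfl fun s _ => hterm s, sum_add_distrib, ← mul_sum]
    change t + c * b = ρ
    linarith
  refine ⟨s1, fun s => if V s1 < V s then 1 else if V s = V s1 then c else 0, fun s => ?_,
    by simp [hlt.not_gt, hlt.ne], fun s => ?_, hmass.le, by rw [hmass, sub_self, zero_mul]⟩
  · have hc : c ∈ Set.Icc (0 : ℝ) 1 :=
      ⟨div_nonneg (sub_nonneg.2 hupper) hb, div_le_one_of_le₀ (by linarith) hb⟩
    dsimp only
    split_ifs
    exacts [⟨zero_le_one, le_rfl⟩, hc, ⟨le_rfl, zero_le_one⟩]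
  · rcases lt_trichotomy (V s1) (V s) with h | h | h
    · simp [h, (sub_pos.2 h).le]
    · simp [h]
    · simp [h.not_gt, h.ne, (sub_neg.2 h).le]

theorem exists_mem_tvBall_sum_mul_eq {μ0 V : S → ℝ} {ρ : ℝ} {s0 : S} (hμ0 : ∀ s, 0 ≤ μ0 s)
    (hsum : ∑ s, μ0 s = 1) (hρ : 0 ≤ ρ) (hs0 : ∀ s, V s0 ≤ V s) :
    ∃ s1 : S, ∃ μ ∈ tvBall μ0 ρ,
      ∑ s, μ s * V s = ∑ s, μ0 s * min (V s) (V s1) - ρ * (V s1 - V s0) := by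
  classical
  obtain ⟨s1, w, hw, hws0, hwV, hmass, hslack⟩ := exists_threshold_weight hμ0 hρ hs0
  have hq : ∀ s, μ0 s * w s ∈ Set.Icc 0 (μ0 s) := fun s =>
    ⟨mul_nonneg (hμ0 s) (hw s).1, mul_le_of_le_one_right (hμ0 s) (hw s).2⟩
  refine ⟨s1, _, shiftMass_mem_tvBall (s0 := s0) hsum hq (by simp [hws0]) hmass, ?_⟩
  have hterm : ∀ s, μ0 s * w s * (V s - V s0)
      = μ0 s * V s - μ0 s * min (V s) (V s1) + μ0 s * w s * (V s1 - V s0) := by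
    intro s
    have hclip : V s - min (V s) (V s1) = max (V s - V s1) 0 := by
      rcases le_total (V s) (V s1) with h | h <;> simp [h]
    linear_combination (-μ0 s) * hclip + μ0 s * hwV s
  rw [sum_shiftMass_mul, sum_congr rfl fun s _ => hterm s, sum_add_distrib, sum_sub_distrib,
    ← sum_mul]
  linear_combination hslack

theorem ciInf_min_const_eq {V : S → ℝ} {s0 : S} (hs0 : ∀ s, V s0 ≤ V s) {α : ℝ} (hα : V s0 ≤ α) :
    ⨅ s, min (V s) α = V s0 :=
  have : Nonempty S := ⟨s0⟩
  le_antisymm ((Finite.ciInf_le _ s0).trans (min_le_left _ _))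
    (le_ciInf fun s => le_min (hs0 s) hα)

end RobustTV

open RobustTV in
theorem stmt5_general {S : Type*} [Fintype S] [Nonempty S]
    (μ0 : S → ℝ) (hμ0 : ∀ s, 0 ≤ μ0 s) (hsum : ∑ s, μ0 s = 1)
    (ρ : ℝ) (hρ : 0 ≤ ρ) (V : S → ℝ) :
    sInf ((fun μ : S → ℝ => ∑ s, μ s * V s) ''
        {μ | (∀ s, 0 ≤ μ s) ∧ (∑ s, μ s = 1) ∧ (1 / 2) * ∑ s, |μ s - μ0 s| ≤ ρ})
    = sSup ((fun α : ℝ =>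
        (∑ s, μ0 s * min (V s) α) - ρ * (α - ⨅ s', min (V s') α)) ''
        Set.Icc (⨅ s, V s) (⨆ s, V s)) := by
  obtain ⟨s0, hs0⟩ := exists_eq_ciInf_of_finite (f := V)
  obtain ⟨sM, hsM⟩ := exists_eq_ciSup_of_finite (f := V)
  have hmin : ∀ s, V s0 ≤ V s := fun s => hs0 ▸ Finite.ciInf_le V s
  have hmax : ∀ s, V s ≤ V sM := fun s => hsM ▸ Finite.le_ciSup V s
  have hweak : ∀ α, V s0 ≤ α → ∀ μ ∈ tvBall μ0 ρ,
      ∑ s, μ0 s * min (V s) α - ρ * (α - V s0) ≤ ∑ s, μ s * V s := fun α hα μ hμ =>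
    sum_mul_min_sub_le_of_mem_tvBall hsum hμ hmin hα
  obtain ⟨s1, μ, hμ, hval⟩ := exists_mem_tvBall_sum_mul_eq hμ0 hsum hρ hmin
  have hinf : sInf ((fun μ : S → ℝ => ∑ s, μ s * V s) '' tvBall μ0 ρ) = ∑ s, μ s * V s :=
    IsLeast.csInf_eq ⟨⟨μ, hμ, rfl⟩, by
      rintro _ ⟨ν, hν, rfl⟩
      exact hval ▸ hweak _ (hmin s1) ν hν⟩
  have hsup : sSup ((fun α : ℝ => (∑ s, μ0 s * min (V s) α) - ρ * (α - ⨅ s', min (V s') α)) ''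
      Set.Icc (V s0) (V sM)) = ∑ s, μ s * V s :=
    IsGreatest.csSup_eq
      ⟨⟨V s1, ⟨hmin s1, hmax s1⟩, by simp only [ciInf_min_const_eq hmin (hmin s1), hval]⟩, by
        rintro _ ⟨α, hα, rfl⟩
        simp only [ciInf_min_const_eq hmin hα.1, hweak α hα.1 μ hμ]⟩
  rw [← hs0, ← hsM]
  exact hinf.trans hsup.symm

/-- Strong duality for the TV-distance robust expectation over a finite state space:
`inf_{μ ∈ U^ρ(μ⁰)} ∑ μ(s) V(s)` equals the supremum over clipping levels
`α ∈ [min V, max V]` of `E_{μ⁰}[[V]_α] − ρ (α − min [V]_α)`. -/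
theorem stmt5 {S : Type*} [Fintype S] [Nonempty S]
    (μ0 : S → ℝ) (hμ0 : ∀ s, 0 ≤ μ0 s) (hsum : ∑ s, μ0 s = 1)
    (ρ : ℝ) (hρ : 0 ≤ ρ) (H : ℝ) (V : S → ℝ)
    (hV : ∀ s, V s ∈ Set.Icc (0 : ℝ) H) :
    sInf ((fun μ : S → ℝ => ∑ s, μ s * V s) ''
        {μ | (∀ s, 0 ≤ μ s) ∧ (∑ s, μ s = 1) ∧ (1 / 2) * ∑ s, |μ s - μ0 s| ≤ ρ})
    = sSup ((fun α : ℝ =>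
        (∑ s, μ0 s * min (V s) α) - ρ * (α - ⨅ s', min (V s') α)) ''
        Set.Icc (⨅ s, V s) (⨆ s, V s)) :=
  stmt5_general μ0 hμ0 hsum ρ hρ V
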